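/- Let N : ℝ → ℝ be differentiable, q : ℝ → ℝ differentiable with q'(s) = N(q(s)) for all s, and let (σ, ρ) be an extremal on an interval (a, t₁) with N(q(σ(t))) > 0 and σ'(t) ≠ 0 for all t, first integrals C₀ = −N(q(σ))(σ'² + ρ'²) < 0 and C₁ = −N(q(σ))ρ' ≠ 0 evaluated at some base point, and C₂ = C₀/C₁² < 0. If N(q(σ(t))) → +∞ as t → t₁, then ρ'(t)/σ'(t) → 0 as t → t₁. (Extremals of general type approach a singular boundary, where the conformal factor blows up, at right angle.) -/

import Mathlib

/-!
Along an extremal the quantities `N(q(σ)) ρ'` and `N(q(σ)) (σ'² + ρ'²)` are first integrals,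
equal to `-C₁` and `-C₀`. Eliminating `ρ'` gives `N² σ'² = -C₀ N - C₁²`, hence
`(ρ'/σ')² = C₁² / (-C₀ N - C₁²)`, which tends to `0` as `N → ∞` because `-C₀ > 0`.
-/

open Filter Set Topology

theorem IsOpen.eq_of_hasDerivAt_zero {s : Set ℝ} {f : ℝ → ℝ} (hs : IsOpen s)
    (hs' : IsPreconnected s) (hf : ∀ t ∈ s, HasDerivAt f 0 t) {x y : ℝ} (hx : x ∈ s)
    (hy : y ∈ s) : f x = f y :=
  hs.is_const_of_deriv_eq_zero hs'
    (fun t ht => (hf t ht).differentiableAt.differentiableWithinAt)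
    (fun t ht => (hf t ht).deriv) hx hy

theorem Filter.Tendsto.nhds_zero_of_sq {α : Type*} {l : Filter α} {f : α → ℝ}
    (h : Tendsto (fun x => f x ^ 2) l (𝓝 0)) : Tendsto f l (𝓝 0) := by
  rw [tendsto_zero_iff_abs_tendsto_zero]
  simpa [Function.comp_def, Real.sqrt_sq_eq_abs] using h.sqrt

theorem div_sq_eq_of_mul_eq_of_mul_sq_add_sq_eq {n x y m e : ℝ} (hy : n * y = m)
    (hxy : n * (x ^ 2 + y ^ 2) = e) (h : 0 < e * n - m ^ 2) :
    (y / x) ^ 2 = m ^ 2 / (e * n - m ^ 2) := by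
  subst hy hxy
  have hden : n * (x ^ 2 + y ^ 2) * n - (n * y) ^ 2 = (n * x) ^ 2 := by ring
  rw [hden] at h ⊢
  have hn : n ≠ 0 := left_ne_zero_of_mul (pow_ne_zero_iff two_ne_zero |>.mp h.ne')
  rw [← div_pow, mul_div_mul_left _ _ hn]

section ConformalExtremal

variable {N q σ ρ : ℝ → ℝ} {t : ℝ}

theorem hasDerivAt_conformalFactor (hN : DifferentiableAt ℝ N (q (σ t)))
    (hq : HasDerivAt q (N (q (σ t))) (σ t)) (hσ : DifferentiableAt ℝ σ t) :
    HasDerivAt (fun t => N (q (σ t))) (deriv N (q (σ t)) * N (q (σ t)) * deriv σ t) t := by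
  rw [mul_assoc]
  exact hN.hasDerivAt.comp t (hq.comp t hσ.hasDerivAt)

theorem hasDerivAt_momentum
    (hn : HasDerivAt (fun t => N (q (σ t))) (deriv N (q (σ t)) * N (q (σ t)) * deriv σ t) t)
    (hρ : DifferentiableAt ℝ (deriv ρ) t)
    (hext : deriv (deriv ρ) t = -(deriv N (q (σ t)) * deriv σ t * deriv ρ t)) :
    HasDerivAt (fun t => N (q (σ t)) * deriv ρ t) 0 t := by
  have h : HasDerivAt (fun t => N (q (σ t)) * deriv ρ t) _ t := hn.mul hρ.hasDerivAt
  rw [hext] at h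
  convert h using 1
  ring

theorem hasDerivAt_energy
    (hn : HasDerivAt (fun t => N (q (σ t))) (deriv N (q (σ t)) * N (q (σ t)) * deriv σ t) t)
    (hσ : DifferentiableAt ℝ (deriv σ) t)
    (hρ : DifferentiableAt ℝ (deriv ρ) t)
    (hext₁ : deriv (deriv σ) t
      = (1 / 2) * deriv N (q (σ t)) * ((deriv ρ t) ^ 2 - (deriv σ t) ^ 2))
    (hext₂ : deriv (deriv ρ) t = -(deriv N (q (σ t)) * deriv σ t * deriv ρ t)) :
    HasDerivAt (fun t => N (q (σ t)) * ((deriv σ t) ^ 2 + (deriv ρ t) ^ 2)) 0 t := by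
  have h : HasDerivAt (fun t => N (q (σ t)) * ((deriv σ t) ^ 2 + (deriv ρ t) ^ 2)) _ t :=
    hn.mul ((hσ.hasDerivAt.pow 2).add (hρ.hasDerivAt.pow 2))
  rw [hext₁, hext₂] at h
  convert h using 1
  ring

end ConformalExtremal

theorem right_angle_at_singular_boundary_general
    (N q σ ρ : ℝ → ℝ) (a t₁ : ℝ) (ha : a < t₁)
    (hN : Differentiable ℝ N)
    (hq : Differentiable ℝ q) (hq' : ∀ s, deriv q s = N (q s))
    (hσ : ∀ t ∈ Set.Ioo a t₁, DifferentiableAt ℝ σ t)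
    (hσ'' : ∀ t ∈ Set.Ioo a t₁, DifferentiableAt ℝ (deriv σ) t)
    (hρ'' : ∀ t ∈ Set.Ioo a t₁, DifferentiableAt ℝ (deriv ρ) t)
    (hext1 : ∀ t ∈ Set.Ioo a t₁, deriv (deriv σ) t
      = (1 / 2) * deriv N (q (σ t)) * ((deriv ρ t) ^ 2 - (deriv σ t) ^ 2))
    (hext2 : ∀ t ∈ Set.Ioo a t₁, deriv (deriv ρ) t
      = -(deriv N (q (σ t)) * deriv σ t * deriv ρ t))
    (t₀ : ℝ) (ht₀ : t₀ ∈ Set.Ioo a t₁) (C₀ C₁ : ℝ)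
    (hC₀ : C₀ = -(N (q (σ t₀))) * ((deriv σ t₀) ^ 2 + (deriv ρ t₀) ^ 2))
    (hC₁ : C₁ = -(N (q (σ t₀))) * deriv ρ t₀)
    (hC₀neg : C₀ < 0)
    (hblow : Filter.Tendsto (fun t => N (q (σ t)))
      (nhdsWithin t₁ (Set.Iio t₁)) Filter.atTop) :
    Filter.Tendsto (fun t => deriv ρ t / deriv σ t)
      (nhdsWithin t₁ (Set.Iio t₁)) (nhds 0) := by
  have hn : ∀ t ∈ Ioo a t₁, HasDerivAt (fun t => N (q (σ t)))
      (deriv N (q (σ t)) * N (q (σ t)) * deriv σ t) t := fun t ht =>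
    hasDerivAt_conformalFactor (hN _) (hq' (σ t) ▸ (hq (σ t)).hasDerivAt) (hσ t ht)
  have hmomentum : ∀ t ∈ Ioo a t₁, N (q (σ t)) * deriv ρ t = -C₁ := fun t ht => by
    rw [hC₁, neg_mul, neg_neg]
    exact isOpen_Ioo.eq_of_hasDerivAt_zero isPreconnected_Ioo
      (fun s hs => hasDerivAt_momentum (hn s hs) (hρ'' s hs) (hext2 s hs)) ht ht₀
  have henergy : ∀ t ∈ Ioo a t₁,
      N (q (σ t)) * ((deriv σ t) ^ 2 + (deriv ρ t) ^ 2) = -C₀ := fun t ht => by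
    rw [hC₀, neg_mul, neg_neg]
    exact isOpen_Ioo.eq_of_hasDerivAt_zero isPreconnected_Ioo
      (fun s hs => hasDerivAt_energy (hn s hs) (hσ'' s hs) (hρ'' s hs) (hext1 s hs)
        (hext2 s hs)) ht ht₀
  have hslope : ∀ᶠ t in 𝓝[<] t₁,
      C₁ ^ 2 / (-C₀ * N (q (σ t)) - C₁ ^ 2) = (deriv ρ t / deriv σ t) ^ 2 := by
    filter_upwards [Ioo_mem_nhdsLT ha, hblow.eventually_gt_atTop (C₁ ^ 2 / -C₀)] with t ht hbig
    rw [← neg_sq C₁] at hbig ⊢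
    have hpos : 0 < -C₀ * N (q (σ t)) - (-C₁) ^ 2 :=
      sub_pos.mpr ((div_lt_iff₀' (neg_pos.mpr hC₀neg)).mp hbig)
    exact (div_sq_eq_of_mul_eq_of_mul_sq_add_sq_eq (hmomentum t ht) (henergy t ht) hpos).symm
  have hlim : Tendsto (fun t => C₁ ^ 2 / (-C₀ * N (q (σ t)) - C₁ ^ 2)) (𝓝[<] t₁) (𝓝 0) :=
    tendsto_const_nhds.div_atTop <| tendsto_atTop_add_const_right _ _ <|
      hblow.const_mul_atTop (neg_pos.mpr hC₀neg)
  exact (hlim.congr' hslope).nhds_zero_of_sq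

/-- Extremals of general type approach a singular boundary, where the conformal
factor `N(q(σ))` blows up, at right angle: if along an extremal on `(a, t₁)`
with `N(q(σ)) > 0`, `σ' ≠ 0`, first integrals `C₀ < 0`, `C₁ ≠ 0` and
`C₂ = C₀/C₁² < 0`, one has `N(q(σ(t))) → ∞` as `t → t₁⁻`, then
`ρ'(t)/σ'(t) → 0` as `t → t₁⁻`. -/
theorem right_angle_at_singular_boundary
    (N q σ ρ : ℝ → ℝ) (a t₁ : ℝ) (ha : a < t₁)
    (hN : Differentiable ℝ N)
    (hq : Differentiable ℝ q) (hq' : ∀ s, deriv q s = N (q s))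
    (hσ : ∀ t ∈ Set.Ioo a t₁, DifferentiableAt ℝ σ t)
    (hσ'' : ∀ t ∈ Set.Ioo a t₁, DifferentiableAt ℝ (deriv σ) t)
    (hρ : ∀ t ∈ Set.Ioo a t₁, DifferentiableAt ℝ ρ t)
    (hρ'' : ∀ t ∈ Set.Ioo a t₁, DifferentiableAt ℝ (deriv ρ) t)
    (hext1 : ∀ t ∈ Set.Ioo a t₁, deriv (deriv σ) t
      = (1 / 2) * deriv N (q (σ t)) * ((deriv ρ t) ^ 2 - (deriv σ t) ^ 2))
    (hext2 : ∀ t ∈ Set.Ioo a t₁, deriv (deriv ρ) t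
      = -(deriv N (q (σ t)) * deriv σ t * deriv ρ t))
    (hNpos : ∀ t ∈ Set.Ioo a t₁, 0 < N (q (σ t)))
    (hσne : ∀ t ∈ Set.Ioo a t₁, deriv σ t ≠ 0)
    (t₀ : ℝ) (ht₀ : t₀ ∈ Set.Ioo a t₁) (C₀ C₁ : ℝ)
    (hC₀ : C₀ = -(N (q (σ t₀))) * ((deriv σ t₀) ^ 2 + (deriv ρ t₀) ^ 2))
    (hC₁ : C₁ = -(N (q (σ t₀))) * deriv ρ t₀)
    (hC₀neg : C₀ < 0) (hC₁ne : C₁ ≠ 0) (hC₂neg : C₀ / C₁ ^ 2 < 0)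
    (hblow : Filter.Tendsto (fun t => N (q (σ t)))
      (nhdsWithin t₁ (Set.Iio t₁)) Filter.atTop) :
    Filter.Tendsto (fun t => deriv ρ t / deriv σ t)
      (nhdsWithin t₁ (Set.Iio t₁)) (nhds 0) :=
  right_angle_at_singular_boundary_general N q σ ρ a t₁ ha hN hq hq' hσ hσ'' hρ'' hext1 hext2 t₀ ht₀
    C₀ C₁ hC₀ hC₁ hC₀neg hblow
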